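/- If P : E → F is an n-homogeneous continuous polynomial which is almost p-summing at every point of E, then for each a ∈ E the differential dP(a) : E → F (a continuous linear map) is almost p-summing at the origin. -/

import Mathlib

/-! For fixed `a, x` the map `t ↦ P(a + t x)` is a polynomial of degree `≤ n + 1` whose linear
coefficient is `dP(a)(x)`. Inverting a Vandermonde matrix gives weights `w_0, …, w_{n+1}` with
`dP(a)(x) = ∑ₘ wₘ (P(a + m x) - P(a))` for all `x`. The Rademacher average is the norm of a linear
map into `L²(0,1)`, hence subadditive and homogeneous, while `‖(m xⱼ)‖_{w,p} ≤ m ‖(xⱼ)‖_{w,p}`;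
so the almost summing estimate for `P` at `a`, applied to each family `(m xⱼ)ⱼ`, sums up to one
for `dP(a)` at `0`. -/

open MeasureTheory Filter Finset

/-- The weak ℓ_q norm of a finite family: `sup_{‖φ‖≤1} (∑ |φ x_j|^q)^{1/q}`. -/
noncomputable def weakNorm {E : Type*} [NormedAddCommGroup E] [NormedSpace ℝ E]
    (q : ℝ) {k : ℕ} (x : Fin k → E) : ℝ :=
  sSup {s : ℝ | ∃ φ : E →L[ℝ] ℝ, ‖φ‖ ≤ 1 ∧ s = (∑ j, |φ (x j)| ^ q) ^ (1 / q)}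

/-- The weak ℓ_q norm of a sequence. -/
noncomputable def weakNormSeq {E : Type*} [NormedAddCommGroup E] [NormedSpace ℝ E]
    (q : ℝ) (x : ℕ → E) : ℝ :=
  sSup {s : ℝ | ∃ φ : E →L[ℝ] ℝ, ‖φ‖ ≤ 1 ∧ s = (∑' j, |φ (x j)| ^ q) ^ (1 / q)}

/-- Unconditionally q-summable sequences: weakly q-summable with weak norms of tails → 0. -/
def UncondSummable {E : Type*} [NormedAddCommGroup E] [NormedSpace ℝ E]
    (q : ℝ) (x : ℕ → E) : Prop :=
  (∀ φ : E →L[ℝ] ℝ, Summable fun j => |φ (x j)| ^ q) ∧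
    Tendsto (fun m => weakNormSeq q fun j => x (j + m)) atTop (nhds 0)

/-- The Rademacher functions on [0,1]. -/
noncomputable def rademacher (j : ℕ) (t : ℝ) : ℝ :=
  if Int.fract ((2 : ℝ) ^ j * t) < 1 / 2 then 1 else -1

/-- `(∫_0^1 ‖∑_j r_j(t) y_j‖² dt)^{1/2}` for a finite family `y` in `F`. -/
noncomputable def radNorm {F : Type*} [NormedAddCommGroup F] [NormedSpace ℝ F]
    {k : ℕ} (y : Fin k → F) : ℝ :=
  (∫ t in (0:ℝ)..1, ‖∑ j : Fin k, rademacher (j : ℕ) t • y j‖ ^ 2) ^ ((1:ℝ) / 2)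

/-- `f` is almost p-summing at `a`. -/
def AlmostSummingAt {E F : Type*} [NormedAddCommGroup E] [NormedSpace ℝ E]
    [NormedAddCommGroup F] [NormedSpace ℝ F] (p : ℝ) (f : E → F) (a : E) : Prop :=
  ∃ C > 0, ∃ ε > 0, ∃ r > 0, ∀ (k : ℕ) (x : Fin k → E), weakNorm p x < ε →
    radNorm (fun j => f (a + x j) - f a) ≤ C * weakNorm p x ^ r

/-- `f` is absolutely (p,q)-summing at `a`. -/
def AbsSummingAt {E F : Type*} [NormedAddCommGroup E] [NormedSpace ℝ E]
    [NormedAddCommGroup F] [NormedSpace ℝ F] (p q : ℝ) (f : E → F) (a : E) : Prop :=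
  ∃ M > 0, ∃ δ > 0, ∃ r > 0, ∀ (k : ℕ) (x : Fin k → E), weakNorm q x < δ →
    (∑ j, ‖f (a + x j) - f a‖ ^ p) ≤ M * weakNorm q x ^ r


section Rademacher

variable {F : Type*} [NormedAddCommGroup F] [NormedSpace ℝ F] {k : ℕ}

lemma measurable_rademacher (j : ℕ) : Measurable (rademacher j) :=
  Measurable.ite
    (measurableSet_lt (measurable_fract.comp (measurable_const.mul measurable_id)) measurable_const)
    measurable_const measurable_const

lemma abs_rademacher_le_one (j : ℕ) (t : ℝ) : |rademacher j t| ≤ 1 := by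
  unfold rademacher; split <;> simp

lemma memLp_rademacher_sum (y : Fin k → F) :
    MemLp (fun t => ∑ j : Fin k, rademacher j t • y j) 2 (volume.restrict (Set.Ioc 0 1)) := by
  refine MemLp.of_bound (Finset.stronglyMeasurable_fun_sum _ fun (j : Fin k) _ =>
    (measurable_rademacher j).stronglyMeasurable.smul_const (y j)).aestronglyMeasurable
    (∑ j, ‖y j‖) (Eventually.of_forall fun t => (norm_sum_le _ _).trans
      (Finset.sum_le_sum fun j _ => ?_))
  rw [norm_smul, Real.norm_eq_abs]
  exact mul_le_of_le_one_left (norm_nonneg _) (abs_rademacher_le_one j t)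

noncomputable def rademacherLp (k : ℕ) :
    (Fin k → F) →ₗ[ℝ] Lp F 2 (volume.restrict (Set.Ioc (0 : ℝ) 1)) where
  toFun y := (memLp_rademacher_sum y).toLp
  map_add' y z := by
    rw [← MemLp.toLp_add]
    exact MemLp.toLp_congr _ _ (Eventually.of_forall fun t => by
      simp [smul_add, Finset.sum_add_distrib])
  map_smul' c y := by
    rw [← MemLp.toLp_const_smul]
    exact MemLp.toLp_congr _ _ (Eventually.of_forall fun t => by
      simp [Finset.smul_sum, smul_comm c])

lemma radNorm_eq_norm_rademacherLp (y : Fin k → F) : radNorm y = ‖rademacherLp k y‖ := by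
  rw [rademacherLp, LinearMap.coe_mk, AddHom.coe_mk, Lp.norm_toLp,
    (memLp_rademacher_sum y).eLpNorm_eq_integral_rpow_norm (by norm_num) (by norm_num),
    ENNReal.toReal_ofReal (by positivity), radNorm, intervalIntegral.integral_of_le zero_le_one]
  norm_num

lemma radNorm_sum_smul_le {ι : Type*} [Fintype ι] (c : ι → ℝ) (y : ι → Fin k → F) :
    radNorm (fun j => ∑ i, c i • y i j) ≤ ∑ i, |c i| * radNorm (y i) := by
  have hsum : (fun j => ∑ i, c i • y i j) = ∑ i, c i • y i := by ext j; simp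
  simp only [hsum, radNorm_eq_norm_rademacherLp, map_sum, map_smul, ← Real.norm_eq_abs,
    ← norm_smul]
  exact norm_sum_le _ _

end Rademacher

section WeakNorm

variable {E : Type*} [NormedAddCommGroup E] [NormedSpace ℝ E] {q : ℝ} {k : ℕ}

lemma bddAbove_weakNorm_set (hq : 0 < q) (x : Fin k → E) :
    BddAbove {s : ℝ | ∃ φ : E →L[ℝ] ℝ, ‖φ‖ ≤ 1 ∧ s = (∑ j, |φ (x j)| ^ q) ^ (1 / q)} := by
  refine ⟨(∑ j, ‖x j‖ ^ q) ^ (1 / q), ?_⟩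
  rintro s ⟨φ, hφ, rfl⟩
  gcongr with j
  rw [← Real.norm_eq_abs]
  exact φ.le_of_opNorm_le hφ (x j) |>.trans_eq (one_mul _)

lemma le_weakNorm (hq : 0 < q) (x : Fin k → E) {φ : E →L[ℝ] ℝ} (hφ : ‖φ‖ ≤ 1) :
    (∑ j, |φ (x j)| ^ q) ^ (1 / q) ≤ weakNorm q x :=
  le_csSup (bddAbove_weakNorm_set hq x) ⟨φ, hφ, rfl⟩

lemma weakNorm_nonneg (hq : 0 < q) (x : Fin k → E) : 0 ≤ weakNorm q x := by
  simpa [Real.zero_rpow hq.ne', Real.zero_rpow (inv_ne_zero hq.ne')] using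
    le_weakNorm hq x (φ := 0) (by simp)

lemma weakNorm_smul_le (hq : 0 < q) (c : ℝ) (x : Fin k → E) :
    weakNorm q (fun j => c • x j) ≤ |c| * weakNorm q x := by
  refine csSup_le ⟨_, 0, by simp, rfl⟩ ?_
  rintro s ⟨φ, hφ, rfl⟩
  have hsum : ∑ j, |φ (c • x j)| ^ q = |c| ^ q * ∑ j, |φ (x j)| ^ q := by
    simp only [map_smul, smul_eq_mul, abs_mul, Finset.mul_sum,
      Real.mul_rpow (abs_nonneg c) (abs_nonneg _)]
  rw [hsum, Real.mul_rpow (by positivity) (by positivity), ← Real.rpow_mul (abs_nonneg c),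
    mul_one_div_cancel hq.ne', Real.rpow_one]
  exact mul_le_mul_of_nonneg_left (le_weakNorm hq x hφ) (abs_nonneg c)

end WeakNorm

lemma AlmostSummingAt.sum_smul_sub {E F : Type*} [NormedAddCommGroup E] [NormedSpace ℝ E]
    [NormedAddCommGroup F] [NormedSpace ℝ F] {p : ℝ} (hp : 0 < p) {f : E → F} {a : E}
    (hf : AlmostSummingAt p f a) {ι : Type*} [Fintype ι] (c w : ι → ℝ) :
    AlmostSummingAt p (fun x => ∑ i, w i • (f (a + c i • x) - f a)) 0 := by
  obtain ⟨C, hC, ε, hε, r, hr, hbound⟩ := hf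
  set K := 1 + ∑ i, |c i|
  have hK : 0 < K := by positivity
  have hcK (i : ι) : |c i| ≤ K :=
    (Finset.single_le_sum (fun i _ => abs_nonneg (c i)) (Finset.mem_univ i)).trans (by simp [K])
  refine ⟨(1 + ∑ i, |w i|) * C * K ^ r, by positivity, ε / K, by positivity, r, hr,
    fun k x hx => ?_⟩
  have hterm (i : ι) :
      radNorm (fun j => f (a + c i • x j) - f a) ≤ C * K ^ r * weakNorm p x ^ r := by
    have hci : weakNorm p (fun j => c i • x j) ≤ K * weakNorm p x :=
      (weakNorm_smul_le hp _ x).trans (by gcongr; exacts [weakNorm_nonneg hp x, hcK i])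
    calc _ ≤ C * weakNorm p (fun j => c i • x j) ^ r :=
          hbound k _ (hci.trans_lt (by rwa [lt_div_iff₀' hK] at hx))
      _ ≤ C * (K * weakNorm p x) ^ r := by gcongr; exact weakNorm_nonneg hp _
      _ = C * K ^ r * weakNorm p x ^ r := by rw [mul_pow, mul_assoc]
  simp only [zero_add, smul_zero, add_zero, sub_self, Finset.sum_const_zero, sub_zero]
  calc radNorm (fun j => ∑ i, w i • (f (a + c i • x j) - f a))
      ≤ ∑ i, |w i| * radNorm (fun j => f (a + c i • x j) - f a) := radNorm_sum_smul_le _ _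
    _ ≤ ∑ i, |w i| * (C * K ^ r * weakNorm p x ^ r) := by gcongr with i; exact hterm i
    _ = (∑ i, |w i|) * C * K ^ r * weakNorm p x ^ r := by rw [← Finset.sum_mul]; ring
    _ ≤ (1 + ∑ i, |w i|) * C * K ^ r * weakNorm p x ^ r := by
      gcongr
      · exact pow_nonneg (weakNorm_nonneg hp x) r
      · linarith

lemma exists_sum_mul_pow_eq_of_injective {K : Type*} [Field K] {N : ℕ} {v : Fin N → K}
    (hv : Function.Injective v) (e : Fin N → K) :
    ∃ w : Fin N → K, ∀ k : Fin N, ∑ m, w m * v m ^ (k : ℕ) = e k := by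
  have hdet : IsUnit (Matrix.vandermonde v).det :=
    isUnit_iff_ne_zero.2 (Matrix.det_vandermonde_ne_zero_iff.2 hv)
  refine ⟨Matrix.vecMul e (Matrix.vandermonde v)⁻¹, fun k => ?_⟩
  have h :
      Matrix.vecMul (Matrix.vecMul e (Matrix.vandermonde v)⁻¹) (Matrix.vandermonde v) = e := by
    rw [Matrix.vecMul_vecMul, Matrix.nonsing_inv_mul _ hdet, Matrix.vecMul_one]
  simpa [Matrix.vecMul, dotProduct] using congrFun h k

namespace MultilinearMap

variable {R M N ι : Type*} [CommRing R] [AddCommGroup M] [Module R M]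
  [AddCommGroup N] [Module R N] [DecidableEq ι] {f : MultilinearMap R (fun _ : ι => M) N}

lemma map_const_add_smul [Fintype ι] (a x : M) (c : R) :
    f (fun _ => a + c • x) =
      ∑ s : Finset ι, c ^ s.card • f (s.piecewise (fun _ => x) fun _ => a) := by
  rw [show (fun _ : ι => a + c • x) = (fun _ => c • x) + fun _ => a from
    funext fun _ => add_comm _ _, f.map_add_univ]
  refine Finset.sum_congr rfl fun s _ => ?_
  rw [← Finset.prod_const, ← f.map_piecewise_smul]
  congr 1
  ext i
  by_cases hi : i ∈ s <;> simp [hi]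

/-- `hw` says that `w` computes exactly the derivative at `0` of polynomials of degree `≤ #ι`
from their values at the nodes `c`; `t ↦ f (a + t • x, …, a + t • x)` is such a polynomial. -/
lemma sum_smul_sub_eq_linearDeriv [Fintype ι] {κ : Type*} [Fintype κ] (c w : κ → R)
    (hw : ∀ k ≤ Fintype.card ι, ∑ m, w m * c m ^ k = if k = 1 then 1 else 0) (a x : M) :
    ∑ m, w m • (f (fun _ => a + c m • x) - f fun _ => a) =
      f.linearDeriv (fun _ => a) fun _ => x := by
  have hsum : ∑ m, w m = 0 := by simpa using hw 0 (Nat.zero_le _)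
  simp_rw [smul_sub, Finset.sum_sub_distrib]
  rw [← Finset.sum_smul, hsum, zero_smul, sub_zero]
  simp_rw [map_const_add_smul, Finset.smul_sum, smul_smul]
  rw [Finset.sum_comm]
  simp_rw [← Finset.sum_smul, hw _ (Finset.card_le_univ _), ite_smul, one_smul, zero_smul]
  rw [← Finset.sum_filter, ← Finset.powerset_univ, ← Finset.powersetCard_eq_filter,
    Finset.powersetCard_one, Finset.sum_map, linearDeriv_apply]
  simp [Finset.piecewise_singleton]

lemma linearDeriv_const_eq_card_smul [Fintype ι]
    (hsym : ∀ (σ : Equiv.Perm ι) (v : ι → M), f (v ∘ σ) = f v) (a x : M) (i : ι) :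
    (f.linearDeriv (fun _ => a) fun _ => x) =
      (Fintype.card ι : R) • f (Function.update (fun _ => a) i x) := by
  rw [linearDeriv_apply, Nat.cast_smul_eq_nsmul, ← Finset.card_univ, ← Finset.sum_const]
  refine Finset.sum_congr rfl fun j _ => ?_
  rw [← hsym (Equiv.swap i j), Function.update_comp_equiv]
  simp [Function.comp_def]

end MultilinearMap

theorem stmt12 {E F : Type*} [NormedAddCommGroup E] [NormedSpace ℝ E]
    [NormedAddCommGroup F] [NormedSpace ℝ F]
    (p : ℝ) (hp : 1 ≤ p) (n : ℕ)
    (T : ContinuousMultilinearMap ℝ (fun _ : Fin (n + 1) => E) F)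
    (hsym : ∀ (σ : Equiv.Perm (Fin (n + 1))) (v : Fin (n + 1) → E), T (v ∘ σ) = T v)
    (hP : ∀ a : E, AlmostSummingAt p (fun x => T fun _ => x) a) (a : E) :
    AlmostSummingAt p
      (fun x => ((n : ℝ) + 1) •
        T (Function.update (fun _ : Fin (n + 1) => a) (Fin.last n) x)) 0 := by
  obtain ⟨w, hw⟩ := exists_sum_mul_pow_eq_of_injective (v := fun m : Fin (n + 2) => (m : ℝ))
    (fun i j h => Fin.ext (Nat.cast_injective h)) fun k => if (k : ℕ) = 1 then 1 else 0
  have hdiff (x : E) : ((n : ℝ) + 1) • T (Function.update (fun _ => a) (Fin.last n) x) =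
      ∑ m, w m • (T (fun _ => a + (m : ℝ) • x) - T fun _ => a) := by
    have h := T.toMultilinearMap.sum_smul_sub_eq_linearDeriv _ w
      (fun k hk => hw ⟨k, by rw [Fintype.card_fin] at hk; omega⟩) a x
    rw [MultilinearMap.linearDeriv_const_eq_card_smul (f := T.toMultilinearMap) hsym a x
      (Fin.last n)] at h
    simpa using h.symm
  simp_rw [hdiff]
  exact (hP a).sum_smul_sub (by linarith) _ _
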